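/- For all real numbers p with 1 < p ≤ 2, there exists a constant C(p) > 0 such that for all vectors ξ, η in ℝ^N, |ξ - η|^p ≤ C(p) · (⟨|ξ|^{p-2}ξ - |η|^{p-2}η, ξ - η⟩)^{p/2} · (|ξ|^p + |η|^p)^{(2-p)/2}. -/

import Mathlib

/-!
With `a = ‖ξ‖`, `b = ‖η‖`, `t = ⟪ξ, η⟫`, the monotonicity estimate
`(p - 1) ‖ξ - η‖² (a + b)^(p-2) ≤ ⟪‖ξ‖^(p-2) ξ - ‖η‖^(p-2) η, ξ - η⟫` compares two functions that
are affine in `t ∈ [-ab, ab]`. At `t = -ab` it follows from subadditivity of `x ↦ x^(p-1)`, at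
`t = ab` from its concavity together with `(a + b)^(p-2) ≤ max(a, b)^(p-2)`. Then
`‖ξ - η‖^p = (‖ξ - η‖² (a + b)^(p-2))^(p/2) ((a + b)^p)^((2-p)/2)` and
`(a + b)^p ≤ 2^(p-1) (a^p + b^p)` give the claim with `C = (2^(p-1))^((2-p)/2) / (p - 1)^(p/2)`.
-/

open RealInnerProductSpace

section Scalar

variable {p a b : ℝ}

lemma rpow_sub_two_mul_self (ha : 0 ≤ a) (hp : p ≠ 1) : a ^ (p - 2) * a = a ^ (p - 1) := by
  rw [← Real.rpow_add_one' ha (by contrapose! hp; linarith)]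
  ring_nf

lemma rpow_le_rpow_add_mul_rpow_sub_one_mul_sub {q : ℝ} (ha : 0 < a) (hb : 0 ≤ b) (hq0 : 0 ≤ q)
    (hq1 : q ≤ 1) : b ^ q ≤ a ^ q + q * a ^ (q - 1) * (b - a) := by
  have hbern := rpow_one_add_le_one_add_mul_self (s := b / a - 1)
    (by linarith [div_nonneg hb ha.le]) hq0 hq1
  rw [add_sub_cancel, Real.div_rpow hb ha.le, div_le_iff₀ (by positivity)] at hbern
  calc b ^ q ≤ (1 + q * (b / a - 1)) * a ^ q := hbern
    _ = a ^ q + q * (a ^ q / a) * (b - a) := by field_simp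
    _ = a ^ q + q * a ^ (q - 1) * (b - a) := by rw [Real.rpow_sub_one ha.ne']

lemma add_rpow_le_two_rpow_mul (ha : 0 ≤ a) (hb : 0 ≤ b) (hp : 1 ≤ p) :
    (a + b) ^ p ≤ 2 ^ (p - 1) * (a ^ p + b ^ p) := by
  lift a to NNReal using ha
  lift b to NNReal using hb
  exact_mod_cast NNReal.rpow_add_le_mul_rpow_add_rpow a b hp

lemma mul_add_sq_mul_rpow_le (ha : 0 ≤ a) (hb : 0 ≤ b) (hp1 : 1 < p) (hp2 : p ≤ 2) :
    (p - 1) * (a + b) ^ 2 * (a + b) ^ (p - 2) ≤ (a ^ (p - 1) + b ^ (p - 1)) * (a + b) := by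
  have hab : 0 ≤ a + b := add_nonneg ha hb
  calc (p - 1) * (a + b) ^ 2 * (a + b) ^ (p - 2)
      ≤ 1 * (a + b) ^ 2 * (a + b) ^ (p - 2) := by gcongr; linarith
    _ = (a + b) ^ (p - 1) * (a + b) := by rw [← rpow_sub_two_mul_self hab hp1.ne']; ring
    _ ≤ (a ^ (p - 1) + b ^ (p - 1)) * (a + b) := by
      gcongr; exact Real.rpow_add_le_add_rpow ha hb (by linarith) (by linarith)

lemma mul_sub_sq_mul_rpow_le (ha : 0 ≤ a) (hb : 0 ≤ b) (hp1 : 1 ≤ p) (hp2 : p ≤ 2) :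
    (p - 1) * (a - b) ^ 2 * (a + b) ^ (p - 2) ≤ (a ^ (p - 1) - b ^ (p - 1)) * (a - b) := by
  wlog hba : b ≤ a generalizing a b
  · have := this hb ha (by linarith)
    rw [add_comm] at this
    linarith
  rcases ha.eq_or_lt with rfl | ha
  · simp [le_antisymm hba hb]
  have htangent := rpow_le_rpow_add_mul_rpow_sub_one_mul_sub ha hb (q := p - 1) (by linarith)
    (by linarith)
  rw [show p - 1 - 1 = p - 2 by ring] at htangent
  calc (p - 1) * (a - b) ^ 2 * (a + b) ^ (p - 2)
      ≤ (p - 1) * (a - b) ^ 2 * a ^ (p - 2) := by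
        refine mul_le_mul_of_nonneg_left ?_ (by positivity)
        exact Real.rpow_le_rpow_of_nonpos ha (by linarith) (by linarith)
    _ = ((p - 1) * a ^ (p - 2) * (a - b)) * (a - b) := by ring
    _ ≤ (a ^ (p - 1) - b ^ (p - 1)) * (a - b) := by gcongr; linarith

lemma add_mul_nonneg_of_endpoints {c d l u t : ℝ} (hlt : l ≤ t) (htu : t ≤ u)
    (hl : 0 ≤ c + d * l) (hu : 0 ≤ c + d * u) : 0 ≤ c + d * t := by
  rcases le_total 0 d with hd | hd
  · nlinarith
  · nlinarith

lemma mul_sq_sub_mul_rpow_le {t : ℝ} (ha : 0 ≤ a) (hb : 0 ≤ b) (hp1 : 1 < p) (hp2 : p ≤ 2)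
    (ht : |t| ≤ a * b) :
    (p - 1) * (a ^ 2 - 2 * t + b ^ 2) * (a + b) ^ (p - 2) ≤
      a ^ (p - 2) * a ^ 2 + b ^ (p - 2) * b ^ 2 - (a ^ (p - 2) + b ^ (p - 2)) * t := by
  obtain ⟨hlt, htu⟩ := abs_le.mp ht
  have hA := rpow_sub_two_mul_self ha hp1.ne'
  have hB := rpow_sub_two_mul_self hb hp1.ne'
  have hminus := mul_add_sq_mul_rpow_le ha hb hp1 hp2
  have hplus := mul_sub_sq_mul_rpow_le ha hb hp1.le hp2
  -- both sides are affine in `t`, so it suffices to check `t = ± a * b`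
  have := add_mul_nonneg_of_endpoints hlt htu
    (c := a ^ (p - 2) * a ^ 2 + b ^ (p - 2) * b ^ 2
      - (p - 1) * (a ^ 2 + b ^ 2) * (a + b) ^ (p - 2))
    (d := 2 * (p - 1) * (a + b) ^ (p - 2) - (a ^ (p - 2) + b ^ (p - 2)))
    (by linear_combination hminus - (a + b) * hA - (a + b) * hB)
    (by linear_combination hplus - (a - b) * hA + (a - b) * hB)
  linarith

lemma rpow_le_rpow_mul_rpow_of_sq_mul_rpow_le {n s I : ℝ} (hp : 0 < p) (hn : 0 ≤ n)
    (hns : n ≤ s) (h : n ^ 2 * s ^ (p - 2) ≤ I) : n ^ p ≤ I ^ (p / 2) * (s ^ p) ^ ((2 - p) / 2) := by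
  rcases hn.eq_or_lt with rfl | hn
  · rw [Real.zero_rpow hp.ne']
    have hI : 0 ≤ I := by simpa using h
    positivity
  have hs : 0 < s := hn.trans_le hns
  calc n ^ p = (n ^ 2 * s ^ (p - 2)) ^ (p / 2) * (s ^ p) ^ ((2 - p) / 2) := by
        rw [Real.mul_rpow (by positivity) (by positivity), ← Real.rpow_natCast,
          ← Real.rpow_mul hn.le, ← Real.rpow_mul hs.le, ← Real.rpow_mul hs.le, mul_assoc,
          ← Real.rpow_add hs]
        ring_nf
        simp
    _ ≤ I ^ (p / 2) * (s ^ p) ^ ((2 - p) / 2) := by gcongr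

end Scalar

lemma mul_norm_sub_sq_mul_rpow_le_inner {F : Type*} [NormedAddCommGroup F]
    [InnerProductSpace ℝ F] {p : ℝ} (hp1 : 1 < p) (hp2 : p ≤ 2) (ξ η : F) :
    (p - 1) * ‖ξ - η‖ ^ 2 * (‖ξ‖ + ‖η‖) ^ (p - 2) ≤
      ⟪‖ξ‖ ^ (p - 2) • ξ - ‖η‖ ^ (p - 2) • η, ξ - η⟫ := by
  have hexpand : ⟪‖ξ‖ ^ (p - 2) • ξ - ‖η‖ ^ (p - 2) • η, ξ - η⟫ =
      ‖ξ‖ ^ (p - 2) * ‖ξ‖ ^ 2 + ‖η‖ ^ (p - 2) * ‖η‖ ^ 2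
        - (‖ξ‖ ^ (p - 2) + ‖η‖ ^ (p - 2)) * ⟪ξ, η⟫ := by
    simp only [inner_sub_left, inner_sub_right, real_inner_smul_left, real_inner_self_eq_norm_sq,
      real_inner_comm ξ η]
    ring
  rw [hexpand, norm_sub_sq_real]
  exact mul_sq_sub_mul_rpow_le (norm_nonneg ξ) (norm_nonneg η) hp1 hp2
    (abs_real_inner_le_norm ξ η)

/-- For all real `p` with `1 < p ≤ 2`, there is `C(p) > 0` such that for all `ξ η ∈ ℝ^N`,
`|ξ - η|^p ≤ C(p) ⟨|ξ|^{p-2}ξ - |η|^{p-2}η, ξ - η⟩^{p/2} (|ξ|^p + |η|^p)^{(2-p)/2}`. -/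
theorem stmt1 (N : ℕ) (p : ℝ) (hp1 : 1 < p) (hp2 : p ≤ 2) :
    ∃ C : ℝ, 0 < C ∧ ∀ ξ η : EuclideanSpace ℝ (Fin N),
      ‖ξ - η‖ ^ p ≤
        C * (⟪(‖ξ‖ ^ (p - 2)) • ξ - (‖η‖ ^ (p - 2)) • η, ξ - η⟫) ^ (p / 2)
          * (‖ξ‖ ^ p + ‖η‖ ^ p) ^ ((2 - p) / 2) := by
  have hp : 0 < p - 1 := by linarith
  refine ⟨(2 ^ (p - 1)) ^ ((2 - p) / 2) / (p - 1) ^ (p / 2), by positivity, fun ξ η => ?_⟩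
  set I := ⟪(‖ξ‖ ^ (p - 2)) • ξ - (‖η‖ ^ (p - 2)) • η, ξ - η⟫
  have hkey : (p - 1) * ‖ξ - η‖ ^ 2 * (‖ξ‖ + ‖η‖) ^ (p - 2) ≤ I :=
    mul_norm_sub_sq_mul_rpow_le_inner hp1 hp2 ξ η
  have hI : 0 ≤ I := le_trans (by positivity) hkey
  calc ‖ξ - η‖ ^ p ≤ (I / (p - 1)) ^ (p / 2) * ((‖ξ‖ + ‖η‖) ^ p) ^ ((2 - p) / 2) :=
        rpow_le_rpow_mul_rpow_of_sq_mul_rpow_le (by linarith) (norm_nonneg _) (norm_sub_le ξ η)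
          (by rw [le_div_iff₀ hp]; linarith)
    _ ≤ (I / (p - 1)) ^ (p / 2) * (2 ^ (p - 1) * (‖ξ‖ ^ p + ‖η‖ ^ p)) ^ ((2 - p) / 2) := by
        refine mul_le_mul_of_nonneg_left (Real.rpow_le_rpow (by positivity) ?_ (by linarith))
          (by positivity)
        exact add_rpow_le_two_rpow_mul (norm_nonneg ξ) (norm_nonneg η) hp1.le
    _ = _ := by
        rw [Real.div_rpow hI hp.le, Real.mul_rpow (by positivity) (by positivity)]
        ring
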